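/- There exists a universal constant C > 0 such that for every finite set A of positive real numbers, |A+A| · |A/A| ≥ C · |A|^{5/2}. -/

import Mathlib

/-!
For a ratio `r`, the points of `A × A` on the line `y = r x` are indexed by `ratioFiber A r`,
and these fibres partition `A × A`. Call `r` popular if its line carries at least
`|A|² / (2 |A/A|)` points; the unpopular lines carry at most half of `A × A`, so there are at
least `|A| / 2` popular ratios. If `r < s` are popular, the vector sums of a point on the line
of slope `r` and a point on the line of slope `s` are distinct points of `(A + A)²` lying
strictly between the two lines. Cones between consecutive popular slopes are disjoint, so
`(|A| / 2 - 1) · |A|⁴ / (4 |A/A|²) ≤ |A + A|²`, i.e. `|A|⁵ ≪ (|A + A| |A/A|)²`.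
-/

open Finset Pointwise

theorem Finset.card_sub_one_mul_le_of_superadditive {α : Type*} [LinearOrder α]
    {c : α → α → ℕ} (hc : ∀ r m s, r ≤ m → m ≤ s → c r m + c m s ≤ c r s)
    {t : ℕ} (S : Finset α) (ht : ∀ r ∈ S, ∀ s ∈ S, r < s → t ≤ c r s) {lo hi : α}
    (hS : ∀ r ∈ S, lo ≤ r ∧ r ≤ hi) : (#S - 1) * t ≤ c lo hi := by
  induction S using Finset.induction_on_max generalizing hi with
  | empty => simp
  | insert s S hlt ih =>
    obtain rfl | hne := S.eq_empty_or_nonempty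
    · simp
    obtain ⟨m, hm, hmax⟩ := S.exists_max_image id hne
    have hsS : s ∉ S := fun h => (hlt s h).false
    have hs := hS s (mem_insert_self s S)
    calc (#(insert s S) - 1) * t = (#S - 1) * t + t := by
          rw [card_insert_of_notMem hsS, Nat.add_sub_cancel, ← Nat.succ_mul,
            Nat.succ_eq_add_one, Nat.sub_add_cancel hne.card_pos]
      _ ≤ c lo m + c m s :=
          add_le_add
            (ih (fun r hr r' hr' => ht r (mem_insert_of_mem hr) r' (mem_insert_of_mem hr'))
              fun r hr => ⟨(hS r (mem_insert_of_mem hr)).1, hmax r hr⟩)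
            (ht m (mem_insert_of_mem hm) s (mem_insert_self s S) (hlt m hm))
      _ ≤ c lo s := hc lo m s (hS m (mem_insert_of_mem hm)).1 (hlt m hm).le
      _ ≤ c lo s + c s hi := Nat.le_add_right _ _
      _ ≤ c lo hi := hc lo s hi hs.1 hs.2

section GroupWithZero

variable {G₀ : Type*} [GroupWithZero G₀] [DecidableEq G₀]

theorem Finset.card_le_card_div_right₀ {s t : Finset G₀} {a : G₀} (ha : a ∈ s)
    (ha0 : a ≠ 0) : #t ≤ #(t / s) :=
  card_le_card_of_injOn (· / a) (fun _ hx => div_mem_div hx ha)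
    fun _ _ _ _ h => (div_left_inj' ha0).1 h

def ratioFiber (A : Finset G₀) (r : G₀) : Finset G₀ := A.filter (r * · ∈ A)

theorem sum_card_ratioFiber {A : Finset G₀} (h0 : (0 : G₀) ∉ A) :
    ∑ r ∈ A / A, #(ratioFiber A r) = #A ^ 2 := by
  have hne : ∀ a ∈ A, a ≠ 0 := fun a ha h => h0 (h ▸ ha)
  rw [sq, ← card_product, card_eq_sum_card_fiberwise (f := fun p : G₀ × G₀ => p.2 / p.1)
    (t := A / A) fun p hp => div_mem_div (mem_product.1 hp).2 (mem_product.1 hp).1]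
  refine sum_congr rfl fun r _ => card_nbij' (fun a => (a, r * a)) Prod.fst ?_ ?_ ?_ ?_
  · intro a ha
    simp only [ratioFiber, coe_filter, Set.mem_ofPred_eq, mem_product] at ha ⊢
    exact ⟨ha, mul_div_cancel_right₀ r (hne a ha.1)⟩
  · intro p hp
    simp only [ratioFiber, coe_filter, Set.mem_ofPred_eq, mem_product] at hp ⊢
    obtain ⟨⟨hp1, hp2⟩, hr⟩ := hp
    rw [div_eq_iff (hne _ hp1)] at hr
    exact ⟨hp1, hr ▸ hp2⟩
  · intro a _
    rfl
  · intro p hp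
    simp only [coe_filter, Set.mem_ofPred_eq, mem_product] at hp
    obtain ⟨⟨hp1, -⟩, hr⟩ := hp
    rw [div_eq_iff (hne _ hp1)] at hr
    exact Prod.ext rfl hr.symm

def popularRatios (A : Finset G₀) : Finset G₀ :=
  (A / A).filter fun r => #A ^ 2 ≤ 2 * #(A / A) * #(ratioFiber A r)

theorem card_le_two_mul_card_popularRatios {A : Finset G₀} (h0 : (0 : G₀) ∉ A) :
    #A ≤ 2 * #(popularRatios A) := by
  obtain rfl | hA := A.eq_empty_or_nonempty
  · simp
  set n := #A
  set m := #(A / A)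
  set U := (A / A).filter fun r => ¬ n ^ 2 ≤ 2 * m * #(ratioFiber A r)
  have hm : 0 < m := (hA.div hA).card_pos
  have hsplit :
      ∑ r ∈ popularRatios A, #(ratioFiber A r) + ∑ r ∈ U, #(ratioFiber A r) = n ^ 2 :=
    (sum_filter_add_sum_filter_not _ _ _).trans (sum_card_ratioFiber h0)
  have hpopular : ∑ r ∈ popularRatios A, #(ratioFiber A r) ≤ #(popularRatios A) * n :=
    sum_le_card_nsmul _ _ _ fun r _ => card_filter_le _ _
  have hunpopular : 2 * m * ∑ r ∈ U, #(ratioFiber A r) ≤ m * n ^ 2 := by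
    rw [mul_sum]
    calc _ ≤ ∑ r ∈ U, n ^ 2 := sum_le_sum fun r hr => (not_le.1 (mem_filter.1 hr).2).le
      _ ≤ m * n ^ 2 := by
          rw [sum_const, smul_eq_mul]
          exact Nat.mul_le_mul_right _ (card_filter_le _ _)
  have hscaled : m * n * n ≤ m * n * (2 * #(popularRatios A)) := by
    nlinarith [Nat.mul_le_mul_left m hpopular]
  exact Nat.le_of_mul_le_mul_left hscaled (by positivity)

end GroupWithZero

section LinearOrderedField

variable {𝕜 : Type*} [Field 𝕜] [LinearOrder 𝕜] [IsStrictOrderedRing 𝕜]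

def sumsetCone (A : Finset 𝕜) (r s : 𝕜) : Finset (𝕜 × 𝕜) :=
  ((A + A) ×ˢ (A + A)).filter fun p => r * p.1 < p.2 ∧ p.2 < s * p.1

theorem card_sumsetCone_add_card_sumsetCone_le (A : Finset 𝕜) {r m s : 𝕜} (hrm : r ≤ m)
    (hms : m ≤ s) : #(sumsetCone A r m) + #(sumsetCone A m s) ≤ #(sumsetCone A r s) := by
  have hdisj : Disjoint (sumsetCone A r m) (sumsetCone A m s) :=
    disjoint_filter_filter' _ _ fun _ h₁ h₂ p hp => ((h₁ p hp).2.trans (h₂ p hp).1).false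
  rw [← card_union_of_disjoint hdisj]
  refine card_le_card fun p hp => ?_
  simp only [sumsetCone, mem_union, mem_filter] at hp ⊢
  rcases hp with ⟨hp, h₁, h₂⟩ | ⟨hp, h₁, h₂⟩
  · have : 0 < p.1 := by nlinarith
    exact ⟨hp, h₁, h₂.trans_le (by nlinarith)⟩
  · have : 0 < p.1 := by nlinarith
    exact ⟨hp, lt_of_le_of_lt (by nlinarith) h₁, h₂⟩

theorem card_ratioFiber_mul_card_ratioFiber_le {A : Finset 𝕜} (hA : ∀ a ∈ A, 0 < a)
    {r s : 𝕜} (hrs : r < s) : #(ratioFiber A r) * #(ratioFiber A s) ≤ #(sumsetCone A r s) := by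
  rw [← card_product]
  refine card_le_card_of_injOn (fun p => (p.1 + p.2, r * p.1 + s * p.2)) ?_ ?_
  · intro p hp
    simp only [ratioFiber, coe_product, coe_filter, Set.mem_prod, Set.mem_ofPred_eq] at hp
    obtain ⟨⟨ha, hra⟩, hb, hsb⟩ := hp
    have := hA _ ha
    have := hA _ hb
    simp only [sumsetCone, coe_filter, mem_product, Set.mem_ofPred_eq]
    exact ⟨⟨add_mem_add ha hb, add_mem_add hra hsb⟩, by nlinarith, by nlinarith⟩
  · intro p _ q _ h
    simp only [Prod.mk.injEq] at h
    have h₂ : p.2 = q.2 :=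
      mul_left_cancel₀ (sub_ne_zero.2 hrs.ne') (by linear_combination h.2 - r * h.1)
    exact Prod.ext (by linarith [h.1]) h₂

theorem card_pow_five_le {A : Finset 𝕜} (hA : ∀ a ∈ A, 0 < a) :
    #A ^ 5 ≤ 10 * (#(A + A) * #(A / A)) ^ 2 := by
  obtain rfl | ⟨a, ha⟩ := A.eq_empty_or_nonempty
  · simp
  set n := #A
  set m := #(A / A)
  set K := #(A + A)
  set P := popularRatios A
  have hP : n ≤ 2 * #P := card_le_two_mul_card_popularRatios fun h => (hA 0 h).false
  have htrivial : n ^ 4 ≤ (K * m) ^ 2 := by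
    have hK : n ≤ K := card_le_card_add_self
    have hm : n ≤ m := card_le_card_div_right₀ ha (hA a ha).ne'
    calc n ^ 4 = (n * n) ^ 2 := by ring
      _ ≤ (K * m) ^ 2 := Nat.pow_le_pow_left (Nat.mul_le_mul hK hm) 2
  have hpair : ∀ r ∈ P, ∀ s ∈ P, r < s → n ^ 4 ≤ 4 * m ^ 2 * #(sumsetCone A r s) := by
    intro r hr s hs hrs
    calc n ^ 4 = n ^ 2 * n ^ 2 := by ring
      _ ≤ (2 * m * #(ratioFiber A r)) * (2 * m * #(ratioFiber A s)) :=
          Nat.mul_le_mul (mem_filter.1 hr).2 (mem_filter.1 hs).2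
      _ = 4 * m ^ 2 * (#(ratioFiber A r) * #(ratioFiber A s)) := by ring
      _ ≤ 4 * m ^ 2 * #(sumsetCone A r s) :=
          Nat.mul_le_mul_left _ (card_ratioFiber_mul_card_ratioFiber_le hA hrs)
  obtain ⟨lo, hlo⟩ := P.bddBelow
  obtain ⟨hi, hhi⟩ := P.bddAbove
  have hchain : (#P - 1) * n ^ 4 ≤ 4 * m ^ 2 * #(sumsetCone A lo hi) :=
    card_sub_one_mul_le_of_superadditive
      (fun r m' s hrm hms => by
        rw [← mul_add]
        exact Nat.mul_le_mul_left _ (card_sumsetCone_add_card_sumsetCone_le A hrm hms))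
      P hpair fun r hr => ⟨hlo hr, hhi hr⟩
  have hcone : #(sumsetCone A lo hi) ≤ K ^ 2 := by
    rw [sq, ← card_product]
    exact card_filter_le _ _
  calc n ^ 5 = n * n ^ 4 := by ring
    _ ≤ 2 * #P * n ^ 4 := Nat.mul_le_mul_right _ hP
    _ ≤ 2 * (#P - 1 + 1) * n ^ 4 := by gcongr; omega
    _ = 2 * ((#P - 1) * n ^ 4 + n ^ 4) := by ring
    _ ≤ 10 * (K * m) ^ 2 := by nlinarith

end LinearOrderedField

theorem sum_division_five_halves :
    ∃ C : ℝ, C > 0 ∧ ∀ A : Finset ℝ, (∀ a ∈ A, 0 < a) →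
      ((A + A).card : ℝ) * ((A / A).card : ℝ) ≥ C * (A.card : ℝ) ^ ((5 : ℝ) / 2) := by
  refine ⟨1 / 4, by norm_num, fun A hA => ?_⟩
  have hsq : ((#A : ℝ) ^ ((5 : ℝ) / 2)) ^ 2 = (#A : ℝ) ^ 5 := by
    rw [← Real.rpow_natCast, ← Real.rpow_mul (Nat.cast_nonneg _)]
    norm_num
  have hnat : #A ^ 5 ≤ (4 * (#(A + A) * #(A / A))) ^ 2 :=
    (card_pow_five_le hA).trans (by nlinarith)
  have h : ((#A : ℝ) ^ ((5 : ℝ) / 2)) ^ 2 ≤ (4 * (#(A + A) * #(A / A) : ℝ)) ^ 2 := by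
    rw [hsq]
    exact_mod_cast hnat
  have := (pow_le_pow_iff_left₀ (by positivity) (by positivity) two_ne_zero).1 h
  linarith
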